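/- If a virtual link diagram D with components K_1, ..., K_n admits a 2-coloring (an assignment of one of two colors to each arc such that at every classical crossing the two strands involved, when one passes under, switch colors appropriately so that the two arcs of the understrand at a crossing have different colors exactly when required by the coloring rule), then for every i the number of classical crossings between K_i and the union of the other components is even. Abstractly: in a 4-regular plane multigraph model, a proper coloring condition at crossing vertices forces the parity constraint that each component crosses the rest of the diagram an even number of classical times. -/
import Mathlib


/-- Parity constraint forced by 2-colorability of a virtual link diagram, in an abstract
combinatorial model.  The components are indexed by `C`; the `i`-th component carries a
cyclic sequence of `p i` classical-crossing passages (and the arcs between consecutive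
passages).  The fixed-point-free involution `τ` pairs the two passages occurring at each
classical crossing.  A 2-coloring `col` of the arcs must switch colors at each classical
passage, as required by the coloring rule at crossings (`finRotate` is the cyclic successor).
Then every component meets the other components in an even number of classical crossings:
the number of passages of component `i` paired by `τ` with a passage of a different
component is even. -/
theorem stmt_19 {C : Type*} [Fintype C] (p : C → ℕ)
    (τ : Equiv.Perm (Σ i : C, Fin (p i)))
    (hinv : ∀ x, τ (τ x) = x) (hfree : ∀ x, τ x ≠ x)
    (col : (Σ i : C, Fin (p i)) → Fin 2)
    (hcol : ∀ (i : C) (j : Fin (p i)), col ⟨i, finRotate (p i) j⟩ ≠ col ⟨i, j⟩) :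
    ∀ i : C, Even (Nat.card {j : Fin (p i) // (τ ⟨i, j⟩).1 ≠ i}) := by
  classical
  intro i
  -- a ZMod 2 version of the coloring
  set c2 : (Σ k : C, Fin (p k)) → ZMod 2 := fun x => ((col x).val : ZMod 2) with hc2
  have flipgen : ∀ a b : Fin 2, a ≠ b → ((a.val : ZMod 2)) = ((b.val : ZMod 2)) + 1 := by decide
  have hflip : ∀ (j : Fin (p i)), c2 ⟨i, finRotate (p i) j⟩ = c2 ⟨i, j⟩ + 1 :=
    fun j => flipgen _ _ (hcol i j)
  -- Step 1: p i is even
  have hpeven : Even (p i) := by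
    have hsum : ∑ j : Fin (p i), c2 ⟨i, finRotate (p i) j⟩ = ∑ j : Fin (p i), c2 ⟨i, j⟩ :=
      Fintype.sum_equiv (finRotate (p i)) _ _ (fun _ => rfl)
    rw [Finset.sum_congr rfl (fun j _ => hflip j), Finset.sum_add_distrib,
      Finset.sum_const, Finset.card_univ, Fintype.card_fin, add_eq_left,
      nsmul_eq_mul, mul_one] at hsum
    exact even_iff_two_dvd.mpr ((ZMod.natCast_eq_zero_iff (p i) 2).mp hsum)
  -- Step 2: self-crossings are even
  set S : Finset (Fin (p i)) := Finset.univ.filter (fun j => (τ ⟨i, j⟩).1 = i) with hS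
  have sig_inj : ∀ {x y : Fin (p i)}, (⟨i, x⟩ : Σ k : C, Fin (p k)) = ⟨i, y⟩ → x = y := by
    intro x y h
    exact eq_of_heq (Sigma.mk.inj_iff.mp h).2
  have exS : ∀ a : Fin (p i), (τ ⟨i, a⟩).1 = i → ∃ b : Fin (p i), τ ⟨i, a⟩ = ⟨i, b⟩ := by
    intro a h
    cases hx : τ ⟨i, a⟩ with
    | mk c b =>
      rw [hx] at h
      dsimp at h
      subst h
      exact ⟨b, rfl⟩
  set g : ∀ a : Fin (p i), a ∈ S → Fin (p i) :=
    fun a ha => (exS a (Finset.mem_filter.mp ha).2).choose with hg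
  have gspec : ∀ a ha, τ ⟨i, a⟩ = ⟨i, g a ha⟩ :=
    fun a ha => (exS a (Finset.mem_filter.mp ha).2).choose_spec
  have gback : ∀ a ha, τ ⟨i, g a ha⟩ = ⟨i, a⟩ := by
    intro a ha
    rw [← gspec a ha]
    exact hinv _
  have g_mem : ∀ a ha, g a ha ∈ S := by
    intro a ha
    rw [hS, Finset.mem_filter]
    exact ⟨Finset.mem_univ _, by rw [gback a ha]⟩
  have g_inv : ∀ a ha, g (g a ha) (g_mem a ha) = a := by
    intro a ha
    exact (sig_inj ((gspec (g a ha) (g_mem a ha)).symm.trans (gback a ha))).symm ▸ rfl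
  have g_ne : ∀ a ha, g a ha ≠ a := by
    intro a ha h
    exact hfree ⟨i, a⟩ (by rw [gspec a ha, h])
  have hzero : (∑ _x ∈ S, (1 : ZMod 2)) = 0 :=
    Finset.sum_involution g (fun a ha => by decide)
      (fun a ha _ => g_ne a ha) g_mem g_inv
  rw [Finset.sum_const, nsmul_eq_mul, mul_one] at hzero
  have hSeven : Even S.card :=
    even_iff_two_dvd.mpr ((ZMod.natCast_eq_zero_iff S.card 2).mp hzero)
  -- Step 3: combine
  have hcardsum : S.card + (Finset.univ.filter (fun j => ¬ (τ ⟨i, j⟩).1 = i)).card = p i := by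
    rw [hS, Finset.card_filter_add_card_filter_not]
    simp
  have hrw : Nat.card {j : Fin (p i) // (τ ⟨i, j⟩).1 ≠ i}
      = (Finset.univ.filter (fun j => ¬ (τ ⟨i, j⟩).1 = i)).card := by
    rw [Nat.card_eq_fintype_card, Fintype.card_subtype]
  rw [hrw]
  have hpe2 := hpeven
  rw [← hcardsum] at hpe2
  exact (Nat.even_add.mp hpe2).mp hSeven
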